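/- Every reduced glue-k-expression ξ of a graph with n vertices and m edges has at most 2m + n leaves (introduce nodes). -/

import Mathlib

/-! ### `k`-labeled graphs and the basic operations on them -/

/-- A `k`-labeled graph: a simple graph together with a labeling of its vertices
by labels from `Fin k`. -/
structure LGraph (k : ℕ) where
  V : Type
  G : SimpleGraph V
  lab : V → Fin k

namespace LGraph

variable {k : ℕ}

/-- The join operation `η_{a,b}`: add all edges between vertices of label `a`
and vertices of label `b`. -/
def join (a b : Fin k) (H : LGraph k) : LGraph k where
  V := H.V
  G :=
    { Adj := fun u v =>
        H.G.Adj u v ∨ (u ≠ v ∧ ((H.lab u = a ∧ H.lab v = b) ∨ (H.lab u = b ∧ H.lab v = a)))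
      symm := by
        refine ⟨?_⟩
        intro u v h
        rcases h with h | ⟨hne, h⟩
        · exact Or.inl (H.G.adj_symm h)
        · refine Or.inr ⟨hne.symm, ?_⟩
          rcases h with ⟨h1, h2⟩ | ⟨h1, h2⟩
          · exact Or.inr ⟨h2, h1⟩
          · exact Or.inl ⟨h2, h1⟩
      loopless := by
        refine ⟨?_⟩
        intro v h
        rcases h with h | ⟨hne, _⟩
        · exact H.G.loopless.irrefl v h
        · exact hne rfl }
  lab := H.lab

/-- The relabel operation `ρ_{a→b}`: every vertex of label `a` gets label `b` instead. -/
def relabel (a b : Fin k) (H : LGraph k) : LGraph k where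
  V := H.V
  G := H.G
  lab := fun v => if H.lab v = a then b else H.lab v

/-- The fuse operation `θ_i`: replace all vertices of label `i` by a single new vertex
(represented by `none`) of label `i` whose neighbourhood is the union of their
neighbourhoods. -/
def fuse (i : Fin k) (H : LGraph k) : LGraph k where
  V := Option {v : H.V // H.lab v ≠ i}
  G :=
    { Adj := fun x y =>
        match x, y with
        | some u, some v => H.G.Adj u.1 v.1
        | some u, none => ∃ w, H.lab w = i ∧ H.G.Adj u.1 w
        | none, some v => ∃ w, H.lab w = i ∧ H.G.Adj w v.1
        | none, none => False
      symm := by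
        refine ⟨?_⟩
        rintro (_ | u) (_ | v) h
        · exact h
        · obtain ⟨w, hw, ha⟩ := h
          exact ⟨w, hw, ha.symm⟩
        · obtain ⟨w, hw, ha⟩ := h
          exact ⟨w, hw, ha.symm⟩
        · exact H.G.adj_symm h
      loopless := by
        refine ⟨?_⟩
        rintro (_ | v) h
        · exact h
        · exact H.G.loopless.irrefl v.1 h }
  lab := fun x =>
    match x with
    | some u => H.lab u.1
    | none => i

/-- Disjoint union `H1 ⊕ H2` of two `k`-labeled graphs. -/
def union (H1 H2 : LGraph k) : LGraph k where
  V := H1.V ⊕ H2.V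
  G := H1.G ⊕g H2.G
  lab := Sum.elim H1.lab H2.lab

/-- Label-preserving isomorphism of `k`-labeled graphs. -/
def LIso (H1 H2 : LGraph k) : Prop :=
  ∃ e : H1.G ≃g H2.G, ∀ v, H2.lab (e v) = H1.lab v

/-- The occurrence of the join operator `η_{a,b}` applied to `H` is not useless,
i.e. it creates at least one new edge. -/
def joinUseful (a b : Fin k) (H : LGraph k) : Prop :=
  ∃ u v : H.V, u ≠ v ∧ H.lab u = a ∧ H.lab v = b ∧ ¬ H.G.Adj u v

/-- The occurrence of the fuse operator `θ_i` applied to `H` is not useless,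
i.e. `H` has at least two vertices of label `i`. -/
def fuseUseful (i : Fin k) (H : LGraph k) : Prop :=
  ∃ u v : H.V, u ≠ v ∧ H.lab u = i ∧ H.lab v = i

/-- The occurrence of a relabel operator `ρ_{a→b}` applied to `H` is not useless,
i.e. `H` has a vertex of label `a`. -/
def relabelUseful (a : Fin k) (H : LGraph k) : Prop :=
  ∃ v : H.V, H.lab v = a

/-- `relabelSeq i [a₁, …, a_q] H = ρ_{a₁→i}(⋯(ρ_{a_q→i}(H))⋯)`. -/
def relabelSeq (i : Fin k) : List (Fin k) → LGraph k → LGraph k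
  | [], H => H
  | a :: as, H => relabel a i (relabelSeq i as H)

/-- None of the relabel operators in `relabelSeq i as H` is useless (this includes
that none of them has the form `ρ_{a→a}`). -/
def relabelSeqUseful (i : Fin k) : List (Fin k) → LGraph k → Prop
  | [], _ => True
  | a :: as, H => relabelSeqUseful i as H ∧ a ≠ i ∧ relabelUseful a (relabelSeq i as H)

end LGraph

/-! ### Glue-`k`-expressions -/

/-- A `k`-labeled graph with titled vertices: vertices are natural-number titles
(titles determine vertex identity), together with a finite vertex set, a finite edge
set and a labeling (only meaningful on `verts`). -/
structure TGraph (k : ℕ) where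
  verts : Finset ℕ
  edges : Finset (Sym2 ℕ)
  lab : ℕ → Fin k

/-- The underlying simple graph (on the vertex set) of a titled `k`-labeled graph. -/
def TGraph.toSG {k : ℕ} (T : TGraph k) : SimpleGraph {v // v ∈ T.verts} where
  Adj u v := u ≠ v ∧ s(u.1, v.1) ∈ T.edges
  symm := by
    refine ⟨?_⟩
    intro u v h
    refine ⟨h.1.symm, ?_⟩
    rw [Sym2.eq_swap]
    exact h.2
  loopless := ⟨fun v h => h.1 rfl⟩

/-- Two titled `k`-labeled graphs are glueable: every shared vertex has the same label
in both graphs and is the unique vertex of its label in each of them. -/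
def Glueable {k : ℕ} (T1 T2 : TGraph k) : Prop :=
  ∀ v ∈ T1.verts ∩ T2.verts,
    T1.lab v = T2.lab v ∧
    (∀ w ∈ T1.verts, T1.lab w = T1.lab v → w = v) ∧
    (∀ w ∈ T2.verts, T2.lab w = T2.lab v → w = v)

/-- A glue-`k`-expression: introduce a titled vertex, join, relabel, glue. -/
inductive GlueExpr (k : ℕ) where
  | intro (v : ℕ) (i : Fin k)
  | join (i j : Fin k) (ξ : GlueExpr k)
  | relabel (i j : Fin k) (ξ : GlueExpr k)
  | glue (ξ1 ξ2 : GlueExpr k)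

namespace GlueExpr

variable {k : ℕ}

/-- The titled `k`-labeled graph `G^ξ` obtained by evaluating a glue-`k`-expression. -/
def eval : GlueExpr k → TGraph k
  | .intro v i => ⟨{v}, ∅, fun _ => i⟩
  | .join i j ξ =>
      let T := ξ.eval
      ⟨T.verts,
       T.edges ∪
         (((T.verts ×ˢ T.verts).filter
            (fun p => p.1 ≠ p.2 ∧ T.lab p.1 = i ∧ T.lab p.2 = j)).image
            (fun p => s(p.1, p.2))),
       T.lab⟩
  | .relabel i j ξ =>
      let T := ξ.eval
      ⟨T.verts, T.edges, fun v => if T.lab v = i then j else T.lab v⟩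
  | .glue ξ1 ξ2 =>
      let T1 := ξ1.eval
      let T2 := ξ2.eval
      ⟨T1.verts ∪ T2.verts, T1.edges ∪ T2.edges,
       fun v => if v ∈ T1.verts then T1.lab v else T2.lab v⟩

/-- Well-formedness of a glue-`k`-expression: joins and relabels use two distinct
labels, and every glue node is applied to two glueable graphs. -/
def WF : GlueExpr k → Prop
  | .intro _ _ => True
  | .join i j ξ => i ≠ j ∧ ξ.WF
  | .relabel i j ξ => i ≠ j ∧ ξ.WF
  | .glue ξ1 ξ2 => ξ1.WF ∧ ξ2.WF ∧ Glueable ξ1.eval ξ2.eval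

/-- A glue-`k`-expression is *reduced* if it contains no useless nodes and moreover:
(1) no join `η_{i,j}` is applied to a graph already containing an edge between a
vertex of label `i` and a vertex of label `j`; (2) the two graphs at every glue node
are edge-disjoint; (3) every shared vertex at a glue node has an incident edge in both
glued graphs. -/
def Reduced : GlueExpr k → Prop
  | .intro _ _ => True
  | .join i j ξ => ξ.Reduced ∧
      -- the join is not useless: it creates at least one new edge
      (∃ u ∈ ξ.eval.verts, ∃ v ∈ ξ.eval.verts,
        u ≠ v ∧ ξ.eval.lab u = i ∧ ξ.eval.lab v = j ∧ s(u, v) ∉ ξ.eval.edges) ∧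
      -- property (1): no already existing edge between labels `i` and `j`
      (∀ u ∈ ξ.eval.verts, ∀ v ∈ ξ.eval.verts,
        ξ.eval.lab u = i → ξ.eval.lab v = j → s(u, v) ∉ ξ.eval.edges)
  | .relabel i _ ξ => ξ.Reduced ∧
      -- the relabel is not useless: some vertex has label `i`
      (∃ v ∈ ξ.eval.verts, ξ.eval.lab v = i)
  | .glue ξ1 ξ2 => ξ1.Reduced ∧ ξ2.Reduced ∧
      -- property (2): the glued graphs are edge-disjoint
      ξ1.eval.edges ∩ ξ2.eval.edges = ∅ ∧
      -- property (3): every shared vertex has an incident edge on both sides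
      (∀ v ∈ ξ1.eval.verts ∩ ξ2.eval.verts,
        (∃ e ∈ ξ1.eval.edges, v ∈ e) ∧ (∃ e ∈ ξ2.eval.edges, v ∈ e))

/-- The number of leaves (introduce nodes) of a glue-`k`-expression. -/
def leafCount : GlueExpr k → ℕ
  | .intro _ _ => 1
  | .join _ _ ξ => ξ.leafCount
  | .relabel _ _ ξ => ξ.leafCount
  | .glue ξ1 ξ2 => ξ1.leafCount + ξ2.leafCount

/-- The number of nodes of the parse tree of a glue-`k`-expression. -/
def nodeCount : GlueExpr k → ℕ
  | .intro _ _ => 1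
  | .join _ _ ξ => ξ.nodeCount + 1
  | .relabel _ _ ξ => ξ.nodeCount + 1
  | .glue ξ1 ξ2 => ξ1.nodeCount + ξ2.nodeCount + 1

end GlueExpr

/-! Give every vertex the weight `max 1 (deg v)`. An introduce node has weight `1`, joins only
add edges and relabels change nothing. At a glue node the edge sets are disjoint, so degrees
add up; a shared vertex has degree at least `1` on both sides, so its two weights add up to
its weight in the glued graph. By induction the number of leaves is at most the weight, which
is at most `∑ v, (deg v + 1) ≤ 2m + n`. -/

open Finset

theorem Finset.sum_add_sum_le_sum_union {ι M : Type*} [DecidableEq ι] [AddCommMonoid M]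
    [PartialOrder M] [IsOrderedAddMonoid M] {s t : Finset ι} {f g h : ι → M}
    (hs : ∀ i ∈ s \ t, f i ≤ h i) (ht : ∀ i ∈ t \ s, g i ≤ h i)
    (hst : ∀ i ∈ s ∩ t, f i + g i ≤ h i) :
    ∑ i ∈ s, f i + ∑ i ∈ t, g i ≤ ∑ i ∈ s ∪ t, h i := by
  have hs' : ∑ i ∈ s, f i = ∑ i ∈ s ∪ t, if i ∈ s then f i else 0 := by
    rw [sum_ite_mem, union_inter_cancel_left]
  have ht' : ∑ i ∈ t, g i = ∑ i ∈ s ∪ t, if i ∈ t then g i else 0 := by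
    rw [sum_ite_mem, union_inter_cancel_right]
  rw [hs', ht', ← sum_add_distrib]
  refine sum_le_sum fun i _ => ?_
  by_cases his : i ∈ s <;> by_cases hit : i ∈ t
  · simpa [his, hit] using hst i (mem_inter.2 ⟨his, hit⟩)
  · simpa [his, hit] using hs i (mem_sdiff.2 ⟨his, hit⟩)
  · simpa [his, hit] using ht i (mem_sdiff.2 ⟨hit, his⟩)
  · simp_all

theorem Sym2.card_toFinset_le_two {α : Type*} [DecidableEq α] (z : Sym2 α) :
    #z.toFinset ≤ 2 := by
  rw [Sym2.card_toFinset]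
  split_ifs <;> omega

namespace TGraph

variable {k : ℕ}

def deg (T : TGraph k) (v : ℕ) : ℕ :=
  #{e ∈ T.edges | v ∈ e}

def weight (T : TGraph k) : ℕ :=
  ∑ v ∈ T.verts, max 1 (T.deg v)

lemma deg_le_deg_of_edges_subset {T T' : TGraph k} (h : T.edges ⊆ T'.edges) (v : ℕ) :
    T.deg v ≤ T'.deg v :=
  card_le_card (filter_subset_filter _ h)

lemma deg_pos_of_mem {T : TGraph k} {v : ℕ} {e : Sym2 ℕ} (he : e ∈ T.edges) (hv : v ∈ e) :
    0 < T.deg v :=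
  card_pos.2 ⟨e, mem_filter.2 ⟨he, hv⟩⟩

lemma weight_le_weight {T T' : TGraph k} (hv : T.verts = T'.verts)
    (he : T.edges ⊆ T'.edges) : T.weight ≤ T'.weight := by
  rw [weight, weight, hv]
  exact sum_le_sum fun v _ => max_le_max le_rfl (deg_le_deg_of_edges_subset he v)

lemma sum_deg_le_two_mul_card_edges (T : TGraph k) :
    ∑ v ∈ T.verts, T.deg v ≤ 2 * #T.edges :=
  calc ∑ v ∈ T.verts, T.deg v = ∑ e ∈ T.edges, #{v ∈ T.verts | v ∈ e} :=
        sum_card_bipartiteAbove_eq_sum_card_bipartiteBelow (· ∈ ·)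
    _ ≤ ∑ _e ∈ T.edges, 2 := sum_le_sum fun e _ =>
        (card_le_card fun v hv => Sym2.mem_toFinset.2 (mem_filter.1 hv).2).trans
          e.card_toFinset_le_two
    _ = 2 * #T.edges := by rw [sum_const, smul_eq_mul, mul_comm]

lemma weight_le (T : TGraph k) : T.weight ≤ 2 * #T.edges + #T.verts :=
  calc T.weight ≤ ∑ v ∈ T.verts, (T.deg v + 1) := sum_le_sum fun v _ => by omega
    _ = ∑ v ∈ T.verts, T.deg v + #T.verts := by rw [sum_add_distrib, card_eq_sum_ones]
    _ ≤ 2 * #T.edges + #T.verts := by grw [sum_deg_le_two_mul_card_edges]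

end TGraph

namespace GlueExpr

variable {k : ℕ}

lemma deg_eval_glue {ξ1 ξ2 : GlueExpr k} (hdisj : Disjoint ξ1.eval.edges ξ2.eval.edges)
    (v : ℕ) : (glue ξ1 ξ2).eval.deg v = ξ1.eval.deg v + ξ2.eval.deg v := by
  rw [TGraph.deg, eval, filter_union]
  exact card_union_of_disjoint (disjoint_filter_filter hdisj)

lemma weight_add_weight_le_weight_eval_glue {ξ1 ξ2 : GlueExpr k}
    (hdisj : Disjoint ξ1.eval.edges ξ2.eval.edges)
    (hshared : ∀ v ∈ ξ1.eval.verts ∩ ξ2.eval.verts,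
      (∃ e ∈ ξ1.eval.edges, v ∈ e) ∧ (∃ e ∈ ξ2.eval.edges, v ∈ e)) :
    ξ1.eval.weight + ξ2.eval.weight ≤ (glue ξ1 ξ2).eval.weight := by
  refine sum_add_sum_le_sum_union (fun v _ => ?_) (fun v _ => ?_) (fun v hv => ?_) <;>
    rw [deg_eval_glue hdisj]
  · omega
  · omega
  · obtain ⟨⟨e1, he1, hv1⟩, ⟨e2, he2, hv2⟩⟩ := hshared v hv
    have := TGraph.deg_pos_of_mem he1 hv1
    have := TGraph.deg_pos_of_mem he2 hv2
    omega

lemma leafCount_le_weight_eval (ξ : GlueExpr k) (hred : ξ.Reduced) :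
    ξ.leafCount ≤ ξ.eval.weight := by
  induction ξ with
  | intro v i => simp [leafCount, eval, TGraph.weight]
  | join i j ξ ih => exact (ih hred.1).trans (TGraph.weight_le_weight rfl subset_union_left)
  | relabel i j ξ ih => exact ih hred.1
  | glue ξ1 ξ2 ih1 ih2 =>
    obtain ⟨hred1, hred2, hdisj, hshared⟩ := hred
    exact (add_le_add (ih1 hred1) (ih2 hred2)).trans
      (weight_add_weight_le_weight_eval_glue (disjoint_iff_inter_eq_empty.2 hdisj) hshared)

end GlueExpr

theorem leafCount_le_of_reduced_general {k : ℕ} (ξ : GlueExpr k)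
    (hred : ξ.Reduced) :
    ξ.leafCount ≤ 2 * ξ.eval.edges.card + ξ.eval.verts.card :=
  (ξ.leafCount_le_weight_eval hred).trans ξ.eval.weight_le

/-- Every reduced glue-`k`-expression of a graph with `n` vertices
and `m` edges has at most `2m + n` leaves. -/
theorem leafCount_le_of_reduced {k : ℕ} (ξ : GlueExpr k)
    (hwf : ξ.WF) (hred : ξ.Reduced) :
    ξ.leafCount ≤ 2 * ξ.eval.edges.card + ξ.eval.verts.card :=
  leafCount_le_of_reduced_general ξ hred
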